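/- Let α be a prime Hurwitz integer, let z ∈ ℤ, and let i, j ∈ {1, 2}. Then there exists a Hurwitz integer λ with μ⁽ⁱ⁾_α(z) + μ⁽ʲ⁾_α(N(α) − z) = α·λ; that is, μ_α(z) + μ_α(N(α) − z) ≡ 0 (mod α) for any of the choices of remainder map μ⁽¹⁾, μ⁽²⁾. -/

import Mathlib

open Quaternion

noncomputable section

/-- Nearest-integer rounding: ties round up if `x ≤ 0`, down if `x > 0`. -/
def rndInt (x : ℚ) : ℤ := if x ≤ 0 then ⌊x + 1/2⌋ else ⌈x - 1/2⌉

/-- Nearest-half-integer rounding: ties round up if `x ≤ 0`, down if `x > 0`. -/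
def rndHalf (x : ℚ) : ℚ := (rndInt (x - 1/2) : ℚ) + 1/2

/-- The quaternion `a + b i + c j + d k` over `ℚ`. -/
def quat (a b c d : ℚ) : ℍ[ℚ] := ⟨a, b, c, d⟩

/-- Componentwise nearest-integer rounding of a quaternion. -/
def qRound (q : ℍ[ℚ]) : ℍ[ℚ] :=
  quat (rndInt q.re) (rndInt q.imI) (rndInt q.imJ) (rndInt q.imK)

/-- Componentwise nearest-half-integer rounding of a quaternion. -/
def qRoundHalf (q : ℍ[ℚ]) : ℍ[ℚ] :=
  quat (rndHalf q.re) (rndHalf q.imI) (rndHalf q.imJ) (rndHalf q.imK)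

/-- A Hurwitz integer: all components in `ℤ`, or all components in `ℤ + 1/2`. -/
def IsHurwitz (q : ℍ[ℚ]) : Prop :=
  ((∃ n : ℤ, q.re = n) ∧ (∃ n : ℤ, q.imI = n) ∧ (∃ n : ℤ, q.imJ = n) ∧ (∃ n : ℤ, q.imK = n)) ∨
  ((∃ n : ℤ, q.re = n + 1/2) ∧ (∃ n : ℤ, q.imI = n + 1/2) ∧ (∃ n : ℤ, q.imJ = n + 1/2) ∧
    (∃ n : ℤ, q.imK = n + 1/2))

/-- `μ⁽¹⁾_α(z) = z − α·⌊(ᾱ·z)/N(α)⌉`. -/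
def mu1 (α : ℍ[ℚ]) (z : ℤ) : ℍ[ℚ] :=
  (z : ℍ[ℚ]) - α * qRound ((star α * (z : ℍ[ℚ])) / ((normSq α : ℚ) : ℍ[ℚ]))

/-- `μ⁽²⁾_α(z) = z − α·⌊⌊(ᾱ·z)/N(α)⌉⌉`. -/
def mu2 (α : ℍ[ℚ]) (z : ℤ) : ℍ[ℚ] :=
  (z : ℍ[ℚ]) - α * qRoundHalf ((star α * (z : ℍ[ℚ])) / ((normSq α : ℚ) : ℍ[ℚ]))

/-- The two remainder maps, indexed by `Fin 2` (`0 ↦ μ⁽¹⁾`, `1 ↦ μ⁽²⁾`). -/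
def mu (α : ℍ[ℚ]) (i : Fin 2) (z : ℤ) : ℍ[ℚ] :=
  if i = 0 then mu1 α z else mu2 α z

/-- The four components of a quaternion. -/
def comp : Fin 4 → ℍ[ℚ] → ℚ
  | 0, q => q.re
  | 1, q => q.imI
  | 2, q => q.imJ
  | 3, q => q.imK

/- Since `α ᾱ = N(α) = p`, we have `z + (p − z) = α ᾱ`, while each remainder map changes its
argument only by a left multiple `α r` of a Hurwitz integer `r`. The sum of the two remainders
is therefore `α (ᾱ − r₁ − r₂)`, and Hurwitz integers are closed under subtraction and
conjugation. -/

theorem isHurwitz_iff (q : ℍ[ℚ]) :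
    IsHurwitz q ↔ ∃ e a b c d : ℤ,
      q.re = a + e / 2 ∧ q.imI = b + e / 2 ∧ q.imJ = c + e / 2 ∧ q.imK = d + e / 2 := by
  constructor
  · rintro (⟨⟨a, ha⟩, ⟨b, hb⟩, ⟨c, hc⟩, ⟨d, hd⟩⟩ | ⟨⟨a, ha⟩, ⟨b, hb⟩, ⟨c, hc⟩, ⟨d, hd⟩⟩)
    · exact ⟨0, a, b, c, d, by simp [ha, hb, hc, hd]⟩
    · exact ⟨1, a, b, c, d, by simp [ha, hb, hc, hd]⟩
  · rintro ⟨e, a, b, c, d, ha, hb, hc, hd⟩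
    obtain ⟨k, rfl | rfl⟩ := Int.even_or_odd' e
    · refine Or.inl ⟨⟨a + k, ?_⟩, ⟨b + k, ?_⟩, ⟨c + k, ?_⟩, ⟨d + k, ?_⟩⟩ <;>
        push_cast at ha hb hc hd ⊢ <;> linarith
    · refine Or.inr ⟨⟨a + k, ?_⟩, ⟨b + k, ?_⟩, ⟨c + k, ?_⟩, ⟨d + k, ?_⟩⟩ <;>
        push_cast at ha hb hc hd ⊢ <;> linarith

def hurwitzAddSubgroup : AddSubgroup ℍ[ℚ] where
  carrier := {q | IsHurwitz q}
  zero_mem' := (isHurwitz_iff 0).2 ⟨0, 0, 0, 0, 0, by simp⟩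
  add_mem' := by
    intro x y hx hy
    obtain ⟨e, a, b, c, d, h⟩ := (isHurwitz_iff x).1 hx
    obtain ⟨e', a', b', c', d', h'⟩ := (isHurwitz_iff y).1 hy
    refine (isHurwitz_iff _).2 ⟨e + e', a + a', b + b', c + c', d + d', ?_⟩
    simp only [Quaternion.re_add, Quaternion.imI_add, Quaternion.imJ_add, Quaternion.imK_add,
      h.1, h.2.1, h.2.2.1, h.2.2.2, h'.1, h'.2.1, h'.2.2.1, h'.2.2.2]
    push_cast
    refine ⟨?_, ?_, ?_, ?_⟩ <;> ring
  neg_mem' := by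
    intro x hx
    obtain ⟨e, a, b, c, d, h⟩ := (isHurwitz_iff x).1 hx
    refine (isHurwitz_iff _).2 ⟨-e, -a, -b, -c, -d, ?_⟩
    simp only [Quaternion.re_neg, Quaternion.imI_neg, Quaternion.imJ_neg, Quaternion.imK_neg,
      h.1, h.2.1, h.2.2.1, h.2.2.2]
    push_cast
    refine ⟨?_, ?_, ?_, ?_⟩ <;> ring

theorem IsHurwitz.star {q : ℍ[ℚ]} (hq : IsHurwitz q) : IsHurwitz (star q) := by
  obtain ⟨e, a, b, c, d, h⟩ := (isHurwitz_iff q).1 hq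
  refine (isHurwitz_iff _).2 ⟨e, a, -b - e, -c - e, -d - e, ?_⟩
  simp only [Quaternion.re_star, Quaternion.imI_star, Quaternion.imJ_star, Quaternion.imK_star,
    h.1, h.2.1, h.2.2.1, h.2.2.2]
  push_cast
  refine ⟨trivial, ?_, ?_, ?_⟩ <;> ring

theorem isHurwitz_qRound (q : ℍ[ℚ]) : IsHurwitz (qRound q) :=
  Or.inl ⟨⟨_, rfl⟩, ⟨_, rfl⟩, ⟨_, rfl⟩, ⟨_, rfl⟩⟩

theorem isHurwitz_qRoundHalf (q : ℍ[ℚ]) : IsHurwitz (qRoundHalf q) :=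
  Or.inr ⟨⟨_, rfl⟩, ⟨_, rfl⟩, ⟨_, rfl⟩, ⟨_, rfl⟩⟩

theorem exists_mu_eq_sub_mul (α : ℍ[ℚ]) (i : Fin 2) (z : ℤ) :
    ∃ r : ℍ[ℚ], IsHurwitz r ∧ mu α i z = (z : ℍ[ℚ]) - α * r := by
  unfold mu
  split_ifs
  · exact ⟨_, isHurwitz_qRound _, rfl⟩
  · exact ⟨_, isHurwitz_qRoundHalf _, rfl⟩

theorem stmt_15_general (α : ℍ[ℚ]) (hH : IsHurwitz α) (p : ℕ)
    (hN : normSq α = (p : ℚ)) (z : ℤ) (i j : Fin 2) :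
    ∃ lam : ℍ[ℚ], IsHurwitz lam ∧ mu α i z + mu α j ((p : ℤ) - z) = α * lam := by
  obtain ⟨r₁, hr₁, h₁⟩ := exists_mu_eq_sub_mul α i z
  obtain ⟨r₂, hr₂, h₂⟩ := exists_mu_eq_sub_mul α j ((p : ℤ) - z)
  have hlam : IsHurwitz (star α - r₁ - r₂) :=
    hurwitzAddSubgroup.sub_mem (hurwitzAddSubgroup.sub_mem hH.star hr₁) hr₂
  have hαα : α * star α = (p : ℍ[ℚ]) := by
    rw [Quaternion.self_mul_star, hN]
    rfl
  refine ⟨_, hlam, ?_⟩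
  rw [h₁, h₂, mul_sub, mul_sub, hαα]
  push_cast
  abel

/-- `μ_α(z) + μ_α(N(α) − z) ≡ 0 (mod α)` for any of the choices of remainder
map `μ⁽¹⁾, μ⁽²⁾`. -/
theorem stmt_15 (α : ℍ[ℚ]) (hH : IsHurwitz α) (p : ℕ) (hp : p.Prime)
    (hN : normSq α = (p : ℚ)) (z : ℤ) (i j : Fin 2) :
    ∃ lam : ℍ[ℚ], IsHurwitz lam ∧ mu α i z + mu α j ((p : ℤ) - z) = α * lam :=
  stmt_15_general α hH p hN z i j
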